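/- arXiv:math/0504417 — 5 statements merged into one kernel-verified Lean document; each statement's English description precedes it below -/
import Mathlib

section
/- Let G be a group with subgroups I, A, N, N̄ such that: A is abelian; A normalizes N and N̄ (so that B := A·N is a subgroup of G); I admits the Iwahori decomposition I = (I∩N)·(I∩A)·(I∩N̄) as a product of sets; and (A·N) ∩ N̄ = {1}. Let a ∈ A be dominant, i.e., a(I∩N)a⁻¹ ⊆ I∩N and a⁻¹(I∩N̄)a ⊆ I∩N̄. Then, as subsets of G, (I·B) ∩ (I·a·I) = I·a, where I·B, I·a·I and I·a denote set products. -/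
open Pointwise

/-- `G` a group with subgroups `I, A, N, N̄`; `A` abelian, normalizing
`N` and `N̄`; `I` has an Iwahori decomposition `I = (I∩N)(I∩A)(I∩N̄)`;
`(A·N) ∩ N̄ = {1}`. For `a ∈ A` dominant, `(I·B) ∩ (I·a·I) = I·a` where `B = A·N`. -/
theorem stmt3 {G : Type*} [Group G] (I A N Nbar : Subgroup G)
    (hAcomm : ∀ x ∈ A, ∀ y ∈ A, x * y = y * x)
    (hAN : ∀ x ∈ A, ∀ n ∈ N, x * n * x⁻¹ ∈ N)
    (hANbar : ∀ x ∈ A, ∀ n ∈ Nbar, x * n * x⁻¹ ∈ Nbar)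
    (hIwa : (I : Set G) =
      ((I : Set G) ∩ (N : Set G)) * ((I : Set G) ∩ (A : Set G)) *
        ((I : Set G) ∩ (Nbar : Set G)))
    (hBNbar : ((A : Set G) * (N : Set G)) ∩ (Nbar : Set G) = {1})
    (a : G) (ha : a ∈ A)
    (hdomN : ∀ x ∈ (I : Set G) ∩ (N : Set G), a * x * a⁻¹ ∈ (I : Set G) ∩ (N : Set G))
    (hdomNbar : ∀ x ∈ (I : Set G) ∩ (Nbar : Set G),
      a⁻¹ * x * a ∈ (I : Set G) ∩ (Nbar : Set G)) :
    ((I : Set G) * ((A : Set G) * (N : Set G))) ∩ ((I : Set G) * {a} * (I : Set G))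
      = (I : Set G) * {a} := by
  apply Set.Subset.antisymm
  · rintro g ⟨h1, h2⟩
    rw [Set.mem_mul] at h1 h2
    obtain ⟨i₁, hi₁, b, hb, hg1⟩ := h1
    obtain ⟨p, hp, i'', hi'', hg2⟩ := h2
    rw [Set.mem_mul] at hp
    obtain ⟨i', hi', a', ha', rfl⟩ := hp
    rw [Set.mem_singleton_iff] at ha'
    subst a'
    rw [Set.mem_mul] at hb
    obtain ⟨c, hc, u, hu, rfl⟩ := hb
    -- Iwahori-decompose i''
    rw [hIwa, Set.mem_mul] at hi''
    obtain ⟨q, hq, m, hm, hi''eq⟩ := hi''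
    rw [Set.mem_mul] at hq
    obtain ⟨n, hn, t, ht, rfl⟩ := hq
    -- push a leftwards: g = i₀ * a * m
    have hanI : a * n * a⁻¹ ∈ (I : Set G) ∩ (N : Set G) := hdomN n hn
    set i₀ : G := i' * (a * n * a⁻¹) * t with hi₀def
    have hi₀ : i₀ ∈ I := mul_mem (mul_mem hi' hanI.1) ht.1
    have hta : t * a = a * t := hAcomm t ht.2 a ha
    have hg0 : i₀ * a * m = g := by
      calc i₀ * a * m = i' * (a * n * a⁻¹) * (t * a) * m := by rw [hi₀def]; group
        _ = i' * (a * n * a⁻¹) * (a * t) * m := by rw [hta]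
        _ = i' * a * (n * t * m) := by group
        _ = g := by rw [hi''eq, hg2]
    have h3 : i₁ * (c * u) = i₀ * a * m := hg1.trans hg0.symm
    have hcu : c * u = i₁⁻¹ * (i₀ * a * m) := by rw [← h3]; group
    -- Iwahori-decompose i₁⁻¹ * i₀
    have hK : i₁⁻¹ * i₀ ∈ (I : Set G) := mul_mem (inv_mem hi₁) hi₀
    rw [hIwa, Set.mem_mul] at hK
    obtain ⟨q₂, hq₂, m₂, hm₂, hdec⟩ := hK
    rw [Set.mem_mul] at hq₂
    obtain ⟨n₂, hn₂, t₂, ht₂, rfl⟩ := hq₂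
    have hm' : a⁻¹ * m₂ * a ∈ (I : Set G) ∩ (Nbar : Set G) := hdomNbar m₂ hm₂
    have hkey : (a⁻¹ * m₂ * a) * m = (a⁻¹ * t₂⁻¹ * c) * ((c⁻¹ * n₂⁻¹ * c) * u) := by
      calc (a⁻¹ * m₂ * a) * m
          = a⁻¹ * t₂⁻¹ * n₂⁻¹ * (n₂ * t₂ * m₂ * (a * m)) := by group
        _ = a⁻¹ * t₂⁻¹ * n₂⁻¹ * (i₁⁻¹ * i₀ * (a * m)) := by rw [hdec]
        _ = a⁻¹ * t₂⁻¹ * n₂⁻¹ * (i₁⁻¹ * (i₀ * a * m)) := by group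
        _ = a⁻¹ * t₂⁻¹ * n₂⁻¹ * (c * u) := by rw [← hcu]
        _ = (a⁻¹ * t₂⁻¹ * c) * ((c⁻¹ * n₂⁻¹ * c) * u) := by group
    have hcn : c⁻¹ * n₂⁻¹ * c ∈ N := by
      have h := hAN c⁻¹ (inv_mem hc) n₂⁻¹ (inv_mem hn₂.2)
      rwa [inv_inv] at h
    have hmemB : (a⁻¹ * m₂ * a) * m ∈ (A : Set G) * (N : Set G) := by
      rw [hkey]
      exact Set.mul_mem_mul (mul_mem (mul_mem (inv_mem ha) (inv_mem ht₂.2)) hc)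
        (mul_mem hcn hu)
    have hNbarmem : (a⁻¹ * m₂ * a) * m ∈ (Nbar : Set G) := mul_mem hm'.2 hm.2
    have h1eq : (a⁻¹ * m₂ * a) * m = 1 := by
      have hx := Set.mem_inter hmemB hNbarmem
      rw [hBNbar] at hx
      exact hx
    have hmval : m = a⁻¹ * m₂⁻¹ * a := by
      have := eq_inv_of_mul_eq_one_right h1eq
      rw [this]; group
    rw [Set.mem_mul]
    refine ⟨i₀ * m₂⁻¹, mul_mem hi₀ (inv_mem hm₂.1), a, rfl, ?_⟩
    rw [← hg0, hmval]; group
  · rintro g hg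
    rw [Set.mem_mul] at hg
    obtain ⟨i, hi, a', ha', rfl⟩ := hg
    rw [Set.mem_singleton_iff] at ha'
    subst a'
    constructor
    · refine Set.mul_mem_mul hi ?_
      rw [Set.mem_mul]
      exact ⟨a, ha, 1, N.one_mem, mul_one a⟩
    · rw [Set.mem_mul]
      exact ⟨i * a, Set.mul_mem_mul hi rfl, 1, I.one_mem, mul_one _⟩
end

section
/- Let G be a group with subgroups I, A, N, N̄ such that: A is abelian; A normalizes N and N̄ (so that B := A·N is a subgroup of G); I admits the Iwahori decomposition I = (I∩N)·(I∩A)·(I∩N̄) as a product of sets. Let a ∈ A be dominant, i.e., a(I∩N)a⁻¹ ⊆ I∩N and a⁻¹(I∩N̄)a ⊆ I∩N̄. Then, as subsets of G, I·a·I = I·a·(I∩N̄), where the left and right sides denote set products. -/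
open Pointwise

/-- `G` a group with subgroups `I, A, N, N̄`; `A` abelian, normalizing
`N` and `N̄`; `I` has an Iwahori decomposition `I = (I∩N)(I∩A)(I∩N̄)`.
For `a ∈ A` dominant, `I·a·I = I·a·(I∩N̄)` as subsets of `G`. -/
theorem stmt4 {G : Type*} [Group G] (I A N Nbar : Subgroup G)
    (hAcomm : ∀ x ∈ A, ∀ y ∈ A, x * y = y * x)
    (hAN : ∀ x ∈ A, ∀ n ∈ N, x * n * x⁻¹ ∈ N)
    (hANbar : ∀ x ∈ A, ∀ n ∈ Nbar, x * n * x⁻¹ ∈ Nbar)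
    (hIwa : (I : Set G) =
      ((I : Set G) ∩ (N : Set G)) * ((I : Set G) ∩ (A : Set G)) *
        ((I : Set G) ∩ (Nbar : Set G)))
    (a : G) (ha : a ∈ A)
    (hdomN : ∀ x ∈ (I : Set G) ∩ (N : Set G), a * x * a⁻¹ ∈ (I : Set G) ∩ (N : Set G))
    (hdomNbar : ∀ x ∈ (I : Set G) ∩ (Nbar : Set G),
      a⁻¹ * x * a ∈ (I : Set G) ∩ (Nbar : Set G)) :
    (I : Set G) * {a} * (I : Set G)
      = (I : Set G) * {a} * ((I : Set G) ∩ (Nbar : Set G)) := by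
  apply Set.Subset.antisymm
  · rintro x hx
    obtain ⟨y, hy, j, hj, rfl⟩ := hx
    obtain ⟨i, hi, a', ha', rfl⟩ := hy
    rw [Set.mem_singleton_iff] at ha'; subst a'
    rw [hIwa] at hj
    obtain ⟨z, hz, nb, hnb, rfl⟩ := hj
    obtain ⟨n, hn, t, ht, rfl⟩ := hz
    have hn' := hdomN n hn
    set n' := a * n * a⁻¹ with hn'def
    have hcomm : a * t = t * a := hAcomm a ha t ht.2
    have key : i * a * (n * t * nb) = (i * n' * t) * a * nb := by
      calc i * a * (n * t * nb) = i * (a * n * a⁻¹) * (a * t) * nb := by group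
        _ = i * (a * n * a⁻¹) * (t * a) * nb := by rw [hcomm]
        _ = (i * n' * t) * a * nb := by rw [hn'def]; group
    show i * a * (n * t * nb) ∈ (I : Set G) * {a} * ((I : Set G) ∩ (Nbar : Set G))
    rw [key]
    exact Set.mul_mem_mul (Set.mul_mem_mul (I.mul_mem (I.mul_mem hi hn'.1) ht.1) rfl) hnb
  · exact Set.mul_subset_mul_left Set.inter_subset_left
end

section
/- Let G be a group with subgroups I, A, N, N̄ such that: A is abelian; A normalizes N and N̄ (so that B := A·N is a subgroup of G); I admits the Iwahori decomposition I = (I∩N)·(I∩A)·(I∩N̄) as a product of sets. Let a, b ∈ A both be dominant, i.e., each of a and b conjugates I∩N into I∩N and its inverse conjugates I∩N̄ into I∩N̄. Then, as subsets of G, I·a·I·b·I = I·(a·b)·I, where both sides denote set products. (In the Iwahori-Hecke algebra this yields the multiplicativity Θ_μ * Θ_η = Θ_{μ+η} for dominant cocharacters μ, η.) -/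
open Pointwise

/-- `G` a group with subgroups `I, A, N, N̄`; `A` abelian, normalizing
`N` and `N̄`; `I` has an Iwahori decomposition `I = (I∩N)(I∩A)(I∩N̄)`.
For `a, b ∈ A` both dominant, `I·a·I·b·I = I·(a·b)·I` as subsets of `G`. -/
theorem stmt5 {G : Type*} [Group G] (I A N Nbar : Subgroup G)
    (hAcomm : ∀ x ∈ A, ∀ y ∈ A, x * y = y * x)
    (hAN : ∀ x ∈ A, ∀ n ∈ N, x * n * x⁻¹ ∈ N)
    (hANbar : ∀ x ∈ A, ∀ n ∈ Nbar, x * n * x⁻¹ ∈ Nbar)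
    (hIwa : (I : Set G) =
      ((I : Set G) ∩ (N : Set G)) * ((I : Set G) ∩ (A : Set G)) *
        ((I : Set G) ∩ (Nbar : Set G)))
    (a : G) (ha : a ∈ A)
    (hdomNa : ∀ x ∈ (I : Set G) ∩ (N : Set G), a * x * a⁻¹ ∈ (I : Set G) ∩ (N : Set G))
    (hdomNbara : ∀ x ∈ (I : Set G) ∩ (Nbar : Set G),
      a⁻¹ * x * a ∈ (I : Set G) ∩ (Nbar : Set G))
    (b : G) (hb : b ∈ A)
    (hdomNb : ∀ x ∈ (I : Set G) ∩ (N : Set G), b * x * b⁻¹ ∈ (I : Set G) ∩ (N : Set G))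
    (hdomNbarb : ∀ x ∈ (I : Set G) ∩ (Nbar : Set G),
      b⁻¹ * x * b ∈ (I : Set G) ∩ (Nbar : Set G)) :
    (I : Set G) * {a} * (I : Set G) * {b} * (I : Set G)
      = (I : Set G) * {a * b} * (I : Set G) := by

  apply Set.Subset.antisymm
  · rintro g ⟨u, hu, z, hz, rfl⟩
    obtain ⟨v, hv, b', hb', rfl⟩ := hu
    obtain ⟨w, hw, y, hy, rfl⟩ := hv
    obtain ⟨x, hx, a', ha', rfl⟩ := hw
    rw [Set.mem_singleton_iff] at ha' hb'
    rw [hIwa] at hy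
    obtain ⟨p, hp, nb, hnb, rfl⟩ := hy
    obtain ⟨n, hn, t, ht, rfl⟩ := hp
    have h : t * a = a * t := hAcomm t ht.2 a ha
    have key : x * a' * (n * t * nb) * b' * z
        = (x * (a * n * a⁻¹) * t) * (a * b) * ((b⁻¹ * nb * b) * z) := by
      rw [ha', hb']
      calc x * a * (n * t * nb) * b * z
          = x * (a * n * a⁻¹) * (a * t) * nb * b * z := by group
        _ = x * (a * n * a⁻¹) * (t * a) * nb * b * z := by rw [← h]
        _ = (x * (a * n * a⁻¹) * t) * (a * b) * ((b⁻¹ * nb * b) * z) := by group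
    show x * a' * (n * t * nb) * b' * z ∈ _
    rw [key]
    refine Set.mul_mem_mul (Set.mul_mem_mul ?_ rfl) ?_
    · exact I.mul_mem (I.mul_mem hx (hdomNa n hn).1) ht.1
    · exact I.mul_mem (hdomNbarb nb hnb).1 hz
  · rintro g ⟨u, hu, z, hz, rfl⟩
    obtain ⟨x, hx, c, hc, rfl⟩ := hu
    rw [Set.mem_singleton_iff] at hc
    have key : x * c * z = x * a * 1 * b * z := by rw [hc]; group
    show x * c * z ∈ _
    rw [key]
    exact Set.mul_mem_mul (Set.mul_mem_mul (Set.mul_mem_mul (Set.mul_mem_mul hx rfl) I.one_mem) rfl) hz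
end

section
/- Let G be a group with subgroups I, A, N, N̄ such that: A is abelian; A normalizes N and N̄ (so that B := A·N is a subgroup of G); I admits the Iwahori decomposition I = (I∩N)·(I∩A)·(I∩N̄) as a product of sets. Let a ∈ A be dominant, i.e., a(I∩N)a⁻¹ ⊆ I∩N and a⁻¹(I∩N̄)a ⊆ I∩N̄. Then, as subsets of G, (I∩N)·(I ∩ aIa⁻¹) = I, where the left side denotes a set product and aIa⁻¹ = {a·i·a⁻¹ : i ∈ I}. -/
open Pointwise

/-- `G` a group with subgroups `I, A, N, N̄`; `A` abelian, normalizing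
`N` and `N̄`; `I` has an Iwahori decomposition `I = (I∩N)(I∩A)(I∩N̄)`.
For `a ∈ A` dominant, `(I∩N)·(I ∩ aIa⁻¹) = I` as subsets of `G`. -/
theorem stmt6 {G : Type*} [Group G] (I A N Nbar : Subgroup G)
    (hAcomm : ∀ x ∈ A, ∀ y ∈ A, x * y = y * x)
    (hAN : ∀ x ∈ A, ∀ n ∈ N, x * n * x⁻¹ ∈ N)
    (hANbar : ∀ x ∈ A, ∀ n ∈ Nbar, x * n * x⁻¹ ∈ Nbar)
    (hIwa : (I : Set G) =
      ((I : Set G) ∩ (N : Set G)) * ((I : Set G) ∩ (A : Set G)) *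
        ((I : Set G) ∩ (Nbar : Set G)))
    (a : G) (ha : a ∈ A)
    (hdomN : ∀ x ∈ (I : Set G) ∩ (N : Set G), a * x * a⁻¹ ∈ (I : Set G) ∩ (N : Set G))
    (hdomNbar : ∀ x ∈ (I : Set G) ∩ (Nbar : Set G),
      a⁻¹ * x * a ∈ (I : Set G) ∩ (Nbar : Set G)) :
    ((I : Set G) ∩ (N : Set G)) *
        ((I : Set G) ∩ ((fun x => a * x * a⁻¹) '' (I : Set G)))
      = (I : Set G) := by
  apply Set.Subset.antisymm
  · rintro x ⟨n, hn, y, hy, rfl⟩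
    exact I.mul_mem hn.1 hy.1
  · intro i hi
    rw [hIwa] at hi
    obtain ⟨p, hp, nb, hnb, rfl⟩ := hi
    obtain ⟨n, hn, t, ht, rfl⟩ := hp
    refine ⟨n, hn, t * nb, ⟨I.mul_mem ht.1 hnb.1, ?_⟩, by group⟩
    refine ⟨a⁻¹ * (t * nb) * a, ?_, by group⟩
    have h1 := hdomNbar nb hnb
    have hc : a⁻¹ * t = t * a⁻¹ := by
      have h := hAcomm t ht.2 a ha
      calc a⁻¹ * t = a⁻¹ * (t * a) * a⁻¹ := by group
        _ = a⁻¹ * (a * t) * a⁻¹ := by rw [h]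
        _ = t * a⁻¹ := by group
    have h2 : a⁻¹ * (t * nb) * a = t * (a⁻¹ * nb * a) := by
      rw [← mul_assoc, ← mul_assoc, hc]; group
    rw [h2]
    exact I.mul_mem ht.1 h1.1
end

section
/- Let G be a group with subgroups I, A, N, N̄ such that: A is abelian; A normalizes N and N̄ (so that B := A·N is a subgroup of G); I admits the Iwahori decomposition I = (I∩N)·(I∩A)·(I∩N̄) as a product of sets. Let a ∈ A be dominant, i.e., a(I∩N)a⁻¹ ⊆ I∩N and a⁻¹(I∩N̄)a ⊆ I∩N̄. Then (I∩N) ∩ aIa⁻¹ = a(I∩N)a⁻¹, and the inclusion I∩N ↪ I induces a bijection from the left coset space (I∩N)/(a(I∩N)a⁻¹) onto the left coset space I/(I ∩ aIa⁻¹); in particular the indices agree: [I : I ∩ aIa⁻¹] = [I∩N : a(I∩N)a⁻¹]. -/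
/-!
Write `g ∈ I` as `n t m` along the Iwahori decomposition. Since `a` commutes with `t ∈ A` and
`a⁻¹ m a ∈ I`, the factor `t m` lies in `I ∩ aIa⁻¹`, so every left coset of `I ∩ aIa⁻¹` in `I`
meets `I ∩ N`. Two elements of `I ∩ N` lie in the same coset iff their quotient lies in
`(I ∩ N) ∩ aIa⁻¹`, which equals `a(I ∩ N)a⁻¹` because `a⁻¹` normalizes `N` and `a` contracts
`I ∩ N`.
-/

open Pointwise

namespace Subgroup

variable {G : Type*} [Group G]

theorem mem_map_conj {H : Subgroup G} {a x : G} :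
    x ∈ H.map (MulAut.conj a).toMonoidHom ↔ a⁻¹ * x * a ∈ H := by
  rw [mem_map_equiv, MulAut.conj_symm_apply]

/-- The inclusion `K ↪ H` induces a bijection `K ⧸ (L ⊓ K) ≃ H ⧸ (L ⊓ H)`. -/
theorem relIndex_eq_of_le_of_forall_exists_inv_mul_mem {H K L : Subgroup G} (hKH : K ≤ H)
    (hHKL : ∀ g ∈ H, ∃ k ∈ K, k⁻¹ * g ∈ L) : L.relIndex K = L.relIndex H := by
  refine Nat.card_congr <| Equiv.ofBijective
    (Quotient.map' (inclusion hKH) fun _ _ h ↦ by rwa [QuotientGroup.leftRel_apply] at h ⊢)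
    ⟨?_, ?_⟩
  · rintro ⟨k₁⟩ ⟨k₂⟩ h
    have h' := Quotient.exact' h
    exact Quotient.sound' (by rwa [QuotientGroup.leftRel_apply] at h' ⊢)
  · rintro ⟨g⟩
    obtain ⟨k, hk, hkg⟩ := hHKL g g.2
    exact ⟨Quotient.mk'' ⟨k, hk⟩, Quotient.sound' <| by
      rwa [QuotientGroup.leftRel_apply, mem_subgroupOf]⟩

theorem inf_inf_map_conj_eq_map_conj_inf {H K : Subgroup G} {a : G}
    (hK : ∀ x ∈ K, a⁻¹ * x * a ∈ K) (hdom : ∀ x ∈ H ⊓ K, a * x * a⁻¹ ∈ H ⊓ K) :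
    H ⊓ K ⊓ H.map (MulAut.conj a).toMonoidHom = (H ⊓ K).map (MulAut.conj a).toMonoidHom := by
  ext x
  simp only [mem_inf, mem_map_conj]
  constructor
  · rintro ⟨⟨-, hxK⟩, hxH⟩
    exact ⟨hxH, hK x hxK⟩
  · intro hx
    have hx' := hdom _ hx
    rw [show a * (a⁻¹ * x * a) * a⁻¹ = x by group] at hx'
    exact ⟨hx', hx.1⟩

theorem exists_inv_mul_mem_inf_map_conj_of_iwahori {I A N Nbar : Subgroup G} {a : G}
    (hAa : ∀ t ∈ A, a * t = t * a)
    (hIwa : (I : Set G) =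
      ((I : Set G) ∩ (N : Set G)) * ((I : Set G) ∩ (A : Set G)) *
        ((I : Set G) ∩ (Nbar : Set G)))
    (hdomNbar : ∀ x ∈ I ⊓ Nbar, a⁻¹ * x * a ∈ I ⊓ Nbar) :
    ∀ g ∈ I, ∃ n ∈ I ⊓ N, n⁻¹ * g ∈ I ⊓ I.map (MulAut.conj a).toMonoidHom := by
  intro g hg
  rw [← SetLike.mem_coe, hIwa] at hg
  obtain ⟨_, ⟨n, hn, t, ht, rfl⟩, m, hm, rfl⟩ := hg
  refine ⟨n, hn, ?_⟩
  rw [show n⁻¹ * (n * t * m) = t * m by group]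
  have hta : a⁻¹ * t * a = t := by rw [mul_assoc, ← hAa t ht.2, inv_mul_cancel_left]
  refine ⟨mul_mem ht.1 hm.1, mem_map_conj.2 ?_⟩
  rw [show a⁻¹ * (t * m) * a = (a⁻¹ * t * a) * (a⁻¹ * m * a) by group, hta]
  exact mul_mem ht.1 (hdomNbar m hm).1

end Subgroup

theorem stmt7_general {G : Type*} [Group G] (I A N Nbar : Subgroup G)
    (hAcomm : ∀ x ∈ A, ∀ y ∈ A, x * y = y * x)
    (hAN : ∀ x ∈ A, ∀ n ∈ N, x * n * x⁻¹ ∈ N)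
    (hIwa : (I : Set G) =
      ((I : Set G) ∩ (N : Set G)) * ((I : Set G) ∩ (A : Set G)) *
        ((I : Set G) ∩ (Nbar : Set G)))
    (a : G) (ha : a ∈ A)
    (hdomN : ∀ x ∈ (I : Set G) ∩ (N : Set G), a * x * a⁻¹ ∈ (I : Set G) ∩ (N : Set G))
    (hdomNbar : ∀ x ∈ (I : Set G) ∩ (Nbar : Set G),
      a⁻¹ * x * a ∈ (I : Set G) ∩ (Nbar : Set G))
    -- `aIa⁻¹` and `a(I∩N)a⁻¹` as subgroups of `G`:
    (aIa : Subgroup G) (haIa : aIa = Subgroup.map (MulAut.conj a).toMonoidHom I)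
    (aINa : Subgroup G) (haINa : aINa = Subgroup.map (MulAut.conj a).toMonoidHom (I ⊓ N)) :
    ((I ⊓ N : Subgroup G) : Set G) ∩ ((aIa : Subgroup G) : Set G) = ((aINa : Subgroup G) : Set G)
    ∧ (∀ g ∈ I, ∃ n ∈ I ⊓ N, n⁻¹ * g ∈ I ⊓ aIa)
    ∧ (∀ n₁ ∈ I ⊓ N, ∀ n₂ ∈ I ⊓ N, n₁⁻¹ * n₂ ∈ I ⊓ aIa → n₁⁻¹ * n₂ ∈ aINa)
    ∧ (I ⊓ aIa).relIndex I = aINa.relIndex (I ⊓ N) := by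
  subst haIa haINa
  have hinf := Subgroup.inf_inf_map_conj_eq_map_conj_inf
    (fun n hn ↦ by simpa using hAN a⁻¹ (inv_mem ha) n hn) hdomN
  have hcoset := Subgroup.exists_inv_mul_mem_inf_map_conj_of_iwahori
    (hAcomm a ha) hIwa hdomNbar
  refine ⟨by rw [← hinf]; rfl, hcoset, ?_, ?_⟩
  · intro n₁ hn₁ n₂ hn₂ h
    rw [← hinf]
    exact Subgroup.mem_inf.2 ⟨mul_mem (inv_mem hn₁) hn₂, h.2⟩
  · calc (I ⊓ I.map _).relIndex I = (I.map (MulAut.conj a).toMonoidHom).relIndex I :=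
          Subgroup.inf_relIndex_left _ _
      _ = (I.map (MulAut.conj a).toMonoidHom).relIndex (I ⊓ N) :=
          (Subgroup.relIndex_eq_of_le_of_forall_exists_inv_mul_mem inf_le_left
            fun g hg ↦ (hcoset g hg).imp fun _ ⟨hn, h⟩ ↦ ⟨hn, h.2⟩).symm
      _ = ((I ⊓ N).map (MulAut.conj a).toMonoidHom).relIndex (I ⊓ N) := by
          rw [← hinf, Subgroup.inf_relIndex_left]

/-- `G` a group with subgroups `I, A, N, N̄`; `A` abelian, normalizing
`N` and `N̄`; `I` has an Iwahori decomposition `I = (I∩N)(I∩A)(I∩N̄)`.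
For `a ∈ A` dominant:
1. `(I∩N) ∩ aIa⁻¹ = a(I∩N)a⁻¹` as subsets of `G`;
2. every left coset of `I ∩ aIa⁻¹` in `I` meets `I∩N` (the map induced by inclusion
   on left coset spaces `(I∩N)/(a(I∩N)a⁻¹) → I/(I ∩ aIa⁻¹)` is surjective);
3. two elements of `I∩N` in the same left coset of `I ∩ aIa⁻¹` lie in the same left
   coset of `a(I∩N)a⁻¹` (the induced map is injective);
4. the indices agree: `[I : I ∩ aIa⁻¹] = [I∩N : a(I∩N)a⁻¹]`. -/
theorem stmt7 {G : Type*} [Group G] (I A N Nbar : Subgroup G)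
    (hAcomm : ∀ x ∈ A, ∀ y ∈ A, x * y = y * x)
    (hAN : ∀ x ∈ A, ∀ n ∈ N, x * n * x⁻¹ ∈ N)
    (hANbar : ∀ x ∈ A, ∀ n ∈ Nbar, x * n * x⁻¹ ∈ Nbar)
    (hIwa : (I : Set G) =
      ((I : Set G) ∩ (N : Set G)) * ((I : Set G) ∩ (A : Set G)) *
        ((I : Set G) ∩ (Nbar : Set G)))
    (a : G) (ha : a ∈ A)
    (hdomN : ∀ x ∈ (I : Set G) ∩ (N : Set G), a * x * a⁻¹ ∈ (I : Set G) ∩ (N : Set G))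
    (hdomNbar : ∀ x ∈ (I : Set G) ∩ (Nbar : Set G),
      a⁻¹ * x * a ∈ (I : Set G) ∩ (Nbar : Set G))
    -- `aIa⁻¹` and `a(I∩N)a⁻¹` as subgroups of `G`:
    (aIa : Subgroup G) (haIa : aIa = Subgroup.map (MulAut.conj a).toMonoidHom I)
    (aINa : Subgroup G) (haINa : aINa = Subgroup.map (MulAut.conj a).toMonoidHom (I ⊓ N)) :
    ((I ⊓ N : Subgroup G) : Set G) ∩ ((aIa : Subgroup G) : Set G) = ((aINa : Subgroup G) : Set G)
    ∧ (∀ g ∈ I, ∃ n ∈ I ⊓ N, n⁻¹ * g ∈ I ⊓ aIa)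
    ∧ (∀ n₁ ∈ I ⊓ N, ∀ n₂ ∈ I ⊓ N, n₁⁻¹ * n₂ ∈ I ⊓ aIa → n₁⁻¹ * n₂ ∈ aINa)
    ∧ (I ⊓ aIa).relIndex I = aINa.relIndex (I ⊓ N) :=
  stmt7_general I A N Nbar hAcomm hAN hIwa a ha hdomN hdomNbar aIa haIa aINa haINa
end
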